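/- Let S ⊆ ℝ_{>0} be a closed subset of ℝ with inf S > 0. Then S₊ = ⋃_{m≥0} S_m, where S₀ = {0} and S_m is the m-fold sumset of S, is a closed subset of ℝ. -/
import Mathlib


/-- The `m`-fold sumset of `S ⊆ ℝ`. For `m = 0` this is `{0}`. -/
def sumset (S : Set ℝ) (m : ℕ) : Set ℝ :=
  {x | ∃ a : Fin m → ℝ, (∀ i, a i ∈ S) ∧ x = ∑ i, a i}

theorem stmt_3 (S : Set ℝ) (hS : IsClosed S) (δ : ℝ) (hδ : 0 < δ)
    (hlb : ∀ s ∈ S, δ ≤ s) :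
    IsClosed (⋃ m : ℕ, sumset S m) := by
  rw [← isSeqClosed_iff_isClosed]
  intro u x hu hux
  set N : ℕ := ⌈(x + 1) / δ⌉₊ with hN
  set K : Set ℝ := S ∩ Set.Icc δ (x + 1) with hK
  set C : Set ℝ := ⋃ m ∈ Finset.range (N + 1),
      (fun a : Fin m → ℝ => ∑ i, a i) '' (Set.univ.pi fun _ => K) with hC
  have hKcomp : IsCompact K := isCompact_Icc.inter_left hS
  have hCcomp : IsCompact C := by
    apply (Finset.range (N + 1)).finite_toSet.isCompact_biUnion
    intro m _
    exact (isCompact_univ_pi fun _ => hKcomp).image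
      (continuous_finset_sum Finset.univ fun i _ => continuous_apply i)
  have hCU : C ⊆ ⋃ m : ℕ, sumset S m := by
    intro y hy
    simp only [hC, Set.mem_iUnion, Finset.mem_coe, Set.mem_image] at hy ⊢
    obtain ⟨m, _, a, ha, hay⟩ := hy
    exact ⟨m, a, fun i => (ha i (Set.mem_univ i)).1, hay.symm⟩
  have key : ∀ n, u n ≤ x + 1 → u n ∈ C := by
    intro n hn
    obtain ⟨m, hm⟩ := Set.mem_iUnion.mp (hu n)
    obtain ⟨a, ha, hsum⟩ := hm
    have hpos : ∀ i, δ ≤ a i := fun i => hlb _ (ha i)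
    have hle : ∀ i : Fin m, a i ≤ x + 1 := by
      intro i
      have : a i ≤ ∑ j, a j := by
        apply Finset.single_le_sum (f := a) (fun j _ => le_trans hδ.le (hpos j))
          (Finset.mem_univ i)
      linarith [hsum ▸ hn]
    have hmN : m ≤ N := by
      have h1 : (m : ℝ) * δ ≤ ∑ j, a j := by
        calc (m : ℝ) * δ = ∑ _j : Fin m, δ := by
              simp [Finset.sum_const, mul_comm]
          _ ≤ ∑ j, a j := Finset.sum_le_sum fun j _ => hpos j
      have h2 : (m : ℝ) ≤ (x + 1) / δ := by
        rw [le_div_iff₀ hδ]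
        linarith [hsum ▸ hn]
      exact_mod_cast h2.trans (Nat.le_ceil _)
    simp only [hC, Set.mem_iUnion]
    refine ⟨m, ?_, a, ?_, hsum.symm⟩
    · simp [Finset.mem_range]; omega
    · intro i _
      exact ⟨ha i, hpos i, hle i⟩
  have hev : ∀ᶠ n in Filter.atTop, u n ∈ C := by
    filter_upwards [hux.eventually_lt_const (by linarith : x < x + 1)] with n hn
    exact key n hn.le
  exact hCU (hCcomp.isClosed.mem_of_tendsto hux hev)
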